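/- arXiv:0810.4707 — 6 statements merged into one kernel-verified Lean document; each statement's English description precedes it below -/
import Mathlib

section
/- Let A be a ring with anti-involution in which there is a central λ with λ + λ̄ = 1. Identify E with its dual via the nondegenerate hermitian form φ, write ψ = φ⁻¹φ₀ (so ψ* = 1 − ψ), and describe O^él(E) as pairs (f, u) with f unitary and f⁻¹ψf = ψ + u − u*. Then the map s : O^min(E) → O^él(E) defined by s(g) = (g, λ(g⁻¹ψg − ψ)) is a group homomorphism splitting the extension 1 → S(E) → O^él(E) → O^min(E) → 1, so O^él(E) is isomorphic to the semidirect product S(E) ⋊ O^min(E), where O^min(E) acts on the self-adjoint endomorphisms S(E) by (u, g) ↦ g⁻¹ u g. -/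
/-!
Since `ψ + star ψ = 1`, the defect `d = g⁻¹ψg − ψ` of a unitary `g` is skew (`star d = −d`), and
a central `ℓ` with `ℓ + star ℓ = 1` splits every skew `d` as `ℓd − star (ℓd)`; hence `(g, ℓd)`
lies in `O^él(E)`.  The map `g ↦ g⁻¹ψg − ψ` is a coboundary for the conjugation action, so
`g ↦ ℓ(g⁻¹ψg − ψ)` is a cocycle and `s` is multiplicative.  Finally two elements of `O^él(E)`
over the same `f` differ by a self-adjoint endomorphism, which is the `S(E)`-coordinate.
-/

section

variable {R : Type*} [Ring R]

lemma conj_mul_sub_self (ψ : R) (g₁ g₂ : Rˣ) :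
    (↑(g₁ * g₂)⁻¹ : R) * ψ * ↑(g₁ * g₂) - ψ
      = ((↑g₂⁻¹ : R) * ψ * g₂ - ψ) + (↑g₂⁻¹ : R) * ((↑g₁⁻¹ : R) * ψ * g₁ - ψ) * g₂ := by
  rw [mul_inv_rev, Units.val_mul, Units.val_mul]
  noncomm_ring

variable [StarRing R]

lemma star_conj_of_star_eq_inv {g : Rˣ} (hg : star (g : R) = ↑g⁻¹) (x : R) :
    star ((↑g⁻¹ : R) * x * g) = (↑g⁻¹ : R) * star x * g := by
  have hg' : star (↑g⁻¹ : R) = g := by rw [← hg, star_star]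
  rw [star_mul, star_mul, hg, hg', mul_assoc]

lemma star_conj_sub_self {ψ : R} (hψ : star ψ = 1 - ψ) {g : Rˣ} (hg : star (g : R) = ↑g⁻¹) :
    star ((↑g⁻¹ : R) * ψ * g - ψ) = -((↑g⁻¹ : R) * ψ * g - ψ) := by
  rw [star_sub, star_conj_of_star_eq_inv hg, hψ, mul_sub, sub_mul, mul_one, Units.inv_mul]
  abel

lemma mul_sub_star_mul_of_star_eq_neg {ℓ d : R} (hcentral : ∀ r : R, ℓ * r = r * ℓ)
    (hsplit : ℓ + star ℓ = 1) (hd : star d = -d) : ℓ * d - star (ℓ * d) = d := by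
  have hstar_central : star ℓ * d = d * star ℓ := by
    simpa only [star_mul, star_star] using (congrArg star (hcentral (star d))).symm
  rw [star_mul, hd, neg_mul, sub_neg_eq_add, ← hstar_central, ← add_mul, hsplit, one_mul]

lemma existsUnique_isSelfAdjoint_conj_eq {f : Rˣ} (hf : star (f : R) = ↑f⁻¹) {w : R}
    (hw : IsSelfAdjoint w) : ∃! u : R, IsSelfAdjoint u ∧ w = (↑f⁻¹ : R) * u * f := by
  have conj_injective : ∀ a b : R, (↑f⁻¹ : R) * a * f = (↑f⁻¹ : R) * b * f → a = b :=
    fun a b h => (Units.mul_right_inj f⁻¹).mp ((Units.mul_left_inj f).mp h)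
  have hconj : (↑f⁻¹ : R) * ((f : R) * w * ↑f⁻¹) * f = w := by
    simp only [mul_assoc, Units.inv_mul, mul_one, Units.inv_mul_cancel_left]
  refine ⟨(f : R) * w * ↑f⁻¹, ⟨?_, hconj.symm⟩, fun u hu => conj_injective _ _ ?_⟩
  · exact conj_injective _ _ (by rw [← star_conj_of_star_eq_inv hf, hconj, hw.star_eq])
  · rw [hconj, ← hu.2]

end

theorem oel_splits_as_semidirect_product
    (R : Type*) [Ring R] [StarRing R]
    (ℓ : R) (hcentral : ∀ r : R, ℓ * r = r * ℓ) (hsplit : ℓ + star ℓ = 1)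
    (ψ : R) (hψ : star ψ = 1 - ψ) :
    -- abbreviate the `u`-component of the section: `sγ g = ℓ (g⁻¹ ψ g − ψ)`
    let sγ : Rˣ → R := fun g => ℓ * ((↑g⁻¹ : R) * ψ * g - ψ)
    -- (1) `s` is well defined: for `g ∈ O^min(E)`, the pair `(g, sγ g)` lies in `O^él(E)`
    (∀ g : Rˣ, star (g : R) = (↑g⁻¹ : R) →
      (∃ u : R, (↑g⁻¹ : R) * ψ * g = ψ + u - star u) →
      (↑g⁻¹ : R) * ψ * g = ψ + sγ g - star (sγ g)) ∧
    -- (2) `s` is multiplicative for the law `(f,u)·(g,v) = (fg, v + g⁻¹ u g)`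
    (∀ g₁ g₂ : Rˣ, star (g₁ : R) = (↑g₁⁻¹ : R) → star (g₂ : R) = (↑g₂⁻¹ : R) →
      sγ (g₁ * g₂) = sγ g₂ + (↑g₂⁻¹ : R) * sγ g₁ * g₂) ∧
    -- (3) semidirect-product decomposition: every element `(f, v)` of `O^él(E)` is uniquely
    --     `(1, u)·s(f)` with `u` self-adjoint, i.e. `v = sγ f + f⁻¹ u f` for a unique
    --     self-adjoint `u ∈ S(E)`
    (∀ (f : Rˣ) (v : R), star (f : R) = (↑f⁻¹ : R) →
      (↑f⁻¹ : R) * ψ * f = ψ + v - star v →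
      ∃! u : R, star u = u ∧ v = sγ f + (↑f⁻¹ : R) * u * f) := by
  intro sγ
  have hsection : ∀ g : Rˣ, star (g : R) = ↑g⁻¹ → sγ g - star (sγ g) = ↑g⁻¹ * ψ * g - ψ :=
    fun g hg => mul_sub_star_mul_of_star_eq_neg hcentral hsplit (star_conj_sub_self hψ hg)
  refine ⟨fun g hg _ => ?_, fun g₁ g₂ _ _ => ?_, fun f v hf hv => ?_⟩
  · rw [add_sub_assoc, hsection g hg, add_sub_cancel]
  · show ℓ * _ = ℓ * _ + _ * (ℓ * _) * _
    rw [conj_mul_sub_self, mul_add, ← mul_assoc (↑g₂⁻¹ : R), ← hcentral, mul_assoc ℓ, mul_assoc ℓ]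
  · have hdiff : IsSelfAdjoint (v - sγ f) := by
      have hskew : v - star v = sγ f - star (sγ f) := by
        rw [hsection f hf, hv, add_sub_assoc, add_sub_cancel_left]
      rw [IsSelfAdjoint, star_sub, ← sub_eq_sub_iff_sub_eq_sub.mp hskew]
    simpa only [IsSelfAdjoint, sub_eq_iff_eq_add'] using
      existsUnique_isSelfAdjoint_conj_eq hf hdiff
end

section
/- Let A be a ring with anti-involution in which there exists a central λ with λ + λ̄ = 1. Let E be an A-module with a hermitian identification E ≅ E*, and let ν be a nilpotent self-adjoint endomorphism of E. Then the element α = 1 + ν t of End(E)[t] can be written as α = γ(t)*·γ(t), where γ(t) is a polynomial in t with coefficients in the subring of End(E) generated by λ and ν, and the involution on End(E)[t] fixes t. -/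
/-!
Since `ℓ` is central, `star ℓ = 1 - ℓ` and `star ν = ν`, the star subalgebra generated by `ℓ` and
`ν` is commutative and lies in the subring they generate, so one may work over a commutative star
ring `P`, with `z = ν t`. There, if `star g * g = 1 + z + e`, then `e` is self-adjoint and the
correction `g' = (1 - ℓ e) g` gives
`star g' * g' = (1 - e + ℓ ℓ* e²)(1 + z + e) = 1 + z + e (ℓ ℓ* e (1 + z + e) - z - e)`,
using `ℓ + ℓ* = 1`. If `z ^ (n + 1)` divides `e`, then `z ^ (n + 2)` divides the new error, and
nilpotency of `z` ends the induction.
-/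

open Polynomial

variable (R : Type*) [Ring R] [StarRing R]

/-- The coefficientwise extension of the adjoint involution to `R[t]`, with `t̄ = t`:
`(Σ aₙ tⁿ)* = Σ aₙ* tⁿ`. -/
noncomputable def starPoly (p : R[X]) : R[X] :=
  p.sum fun n a => C (star a) * X ^ n

section CommStarRing

variable {P : Type*} [CommRing P] [StarRing P] {ℓ z : P}

theorem star_mul_self_one_sub_mul_eq (hℓ : ℓ + star ℓ = 1) (hz : IsSelfAdjoint z) {g e : P}
    (hg : star g * g = 1 + z + e) :
    star ((1 - ℓ * e) * g) * ((1 - ℓ * e) * g) =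
      1 + z + e * (ℓ * star ℓ * e * (1 + z + e) - z - e) := by
  have he : IsSelfAdjoint e := by
    rw [eq_sub_of_add_eq' hg.symm]
    exact (IsSelfAdjoint.star_mul_self g).sub ((IsSelfAdjoint.one P).add hz)
  have hℓ' : star ℓ = 1 - ℓ := eq_sub_of_add_eq' hℓ
  simp only [star_mul, star_sub, star_one, he.star_eq, hℓ']
  linear_combination (1 - (1 - ℓ) * e) * (1 - ℓ * e) * hg

theorem exists_star_mul_self_eq_one_add_add_pow_mul (hℓ : ℓ + star ℓ = 1) (hz : IsSelfAdjoint z)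
    (n : ℕ) : ∃ g r : P, star g * g = 1 + z + z ^ (n + 1) * r := by
  induction n with
  | zero => exact ⟨1, -1, by simp⟩
  | succ n ih =>
    obtain ⟨g, r, hg⟩ := ih
    refine ⟨(1 - ℓ * (z ^ (n + 1) * r)) * g,
      r * (ℓ * star ℓ * z ^ n * r * (1 + z + z ^ (n + 1) * r) - 1 - z ^ n * r), ?_⟩
    rw [star_mul_self_one_sub_mul_eq hℓ hz hg]
    ring

theorem exists_star_mul_self_eq_one_add (hℓ : ℓ + star ℓ = 1) (hz : IsSelfAdjoint z)
    (hnil : IsNilpotent z) : ∃ g : P, star g * g = 1 + z := by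
  obtain ⟨k, hk⟩ := hnil
  obtain ⟨g, r, hg⟩ := exists_star_mul_self_eq_one_add_add_pow_mul hℓ hz k
  exact ⟨g, by rw [hg, pow_succ, hk, zero_mul, zero_mul, add_zero]⟩

end CommStarRing

namespace Polynomial

variable {S : Type*} [CommSemiring S] [StarRing S]

noncomputable abbrev starRingOfComm : StarRing S[X] where
  star p := p.map (starRingEnd S)
  star_involutive p := by simp [map_map]
  star_mul p q := by simp [Polynomial.map_mul, mul_comm]
  star_add p q := Polynomial.map_add _

end Polynomial

theorem starPoly_coeff (p : R[X]) (i : ℕ) : (starPoly R p).coeff i = star (p.coeff i) := by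
  simp only [starPoly, Polynomial.sum, finsetSum_coeff, coeff_C_mul_X_pow]
  by_cases hi : i ∈ p.support
  · simp [hi]
  · simp [hi, notMem_support_iff.mp hi]

theorem starPoly_map {S : Type*} [CommRing S] [StarRing S] (f : S →+* R)
    (hf : ∀ x, f (star x) = star (f x)) (q : S[X]) :
    starPoly R (q.map f) = (q.map (starRingEnd S)).map f := by
  ext i
  simp [starPoly_coeff, coeff_map, ← hf, starRingEnd_apply]

theorem exists_starPoly_mul_self_eq_one_add_C_mul_X {S : Type*} [CommRing S] [StarRing S]
    (f : S →+* R) (hf : ∀ x, f (star x) = star (f x)) {ℓ u : S} (hℓ : ℓ + star ℓ = 1)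
    (hu : IsSelfAdjoint u) (hnil : IsNilpotent u) :
    ∃ γ : R[X], (∀ i, γ.coeff i ∈ f.range) ∧ starPoly R γ * γ = 1 + C (f u) * X := by
  let := Polynomial.starRingOfComm (S := S)
  have hCℓ : C ℓ + star (C ℓ) = 1 := by
    change C ℓ + (C ℓ).map (starRingEnd S) = 1
    rw [map_C, starRingEnd_apply, ← C_add, hℓ, C_1]
  have hz : IsSelfAdjoint (C u * X) := by
    change (C u * X).map (starRingEnd S) = C u * X
    rw [Polynomial.map_mul, map_C, map_X, starRingEnd_apply, hu.star_eq]
  have hnilz : IsNilpotent (C u * X) := (Commute.all _ _).isNilpotent_mul_right (hnil.map C)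
  obtain ⟨g, hg⟩ := exists_star_mul_self_eq_one_add hCℓ hz hnilz
  refine ⟨g.map f, fun i => by simp [coeff_map], ?_⟩
  rw [starPoly_map R f hf, ← Polynomial.map_mul]
  change (star g * g).map f = _
  simp [hg]

theorem StarAlgebra.adjoin_int_subset_closure {A : Type*} [Ring A] [StarRing A] {s : Set A}
    (hs : star s ⊆ Subring.closure s) : (StarAlgebra.adjoin ℤ s : Set A) ⊆ Subring.closure s := by
  intro x hx
  rw [SetLike.mem_coe, ← StarSubalgebra.mem_toSubalgebra, StarAlgebra.adjoin_toSubalgebra,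
    Algebra.adjoin_int] at hx
  exact Subring.closure_le.2 (Set.union_subset Subring.subset_closure hs) hx

theorem one_add_nilpotent_selfadjoint_factors
    (ℓ : R) (hcentral : ∀ r : R, ℓ * r = r * ℓ) (hsplit : ℓ + star ℓ = 1)
    (ν : R) (hν : star ν = ν) (hnil : IsNilpotent ν) :
    ∃ γ : R[X],
      (∀ i, γ.coeff i ∈ Subring.closure ({ℓ, ν} : Set R)) ∧
      starPoly R γ * γ = 1 + C ν * X := by
  have hstar : star ℓ = 1 - ℓ := eq_sub_of_add_eq' hsplit
  have hcomm : ∀ a ∈ ({ℓ, ν} : Set R), ∀ b ∈ ({ℓ, ν} : Set R), a * b = b * a := by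
    rintro a (rfl | rfl) b (rfl | rfl) <;> simp [hcentral]
  have hcomm_star : ∀ a ∈ ({ℓ, ν} : Set R), ∀ b ∈ ({ℓ, ν} : Set R), a * star b = star b * a := by
    rintro a ha b (rfl | rfl)
    · rw [hstar, mul_sub, sub_mul, mul_one, one_mul, hcentral]
    · rw [hν, hcomm a ha _ (by simp)]
  have hstar_closure : star ({ℓ, ν} : Set R) ⊆ Subring.closure {ℓ, ν} := by
    rintro x (hx | hx) <;> rw [← star_star x, hx]
    · rw [hstar]
      exact sub_mem (one_mem _) (Subring.subset_closure (by simp))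
    · rw [hν]
      exact Subring.subset_closure (by simp)
  set S := StarAlgebra.adjoin ℤ ({ℓ, ν} : Set R)
  have : IsMulCommutative S := StarAlgebra.isMulCommutative_adjoin ℤ hcomm hcomm_star
  let : CommRing S := IsMulCommutative.instCommRing
  have hℓS : ℓ ∈ S := StarAlgebra.subset_adjoin ℤ _ (by simp)
  have hνS : ν ∈ S := StarAlgebra.subset_adjoin ℤ _ (by simp)
  obtain ⟨k, hk⟩ := hnil
  obtain ⟨γ, hγS, hγ⟩ := exists_starPoly_mul_self_eq_one_add_C_mul_X R (S.subtype : S →+* R)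
    (fun _ => rfl) (ℓ := ⟨ℓ, hℓS⟩) (u := ⟨ν, hνS⟩) (Subtype.ext hsplit) (Subtype.ext hν)
    ⟨k, Subtype.ext hk⟩
  exact ⟨γ, fun i => StarAlgebra.adjoin_int_subset_closure hstar_closure (by simpa using hγS i),
    hγ⟩
end

section
/- Let A be a ring with anti-involution and I a nilpotent two-sided ideal stable under the involution. Then every nondegenerate even ε-hermitian form on a f.g. projective (A/I)-module lifts: if E is a f.g. projective A-module and φ : E/IE → (E/IE)* is an isomorphism of the form φ₀ + ε ᵗφ₀, then choosing any lift ψ₀ : E → E* of φ₀, the morphism ψ = ψ₀ + ε ᵗψ₀ is a nondegenerate even ε-hermitian form on E reducing to φ modulo I. -/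
open MulOpposite

variable (A : Type*) [Ring A] [StarRing A]

/-- The conjugate-semilinear dual of a right `A`-module `E` (right modules being
`Aᵐᵒᵖ`-modules): additive maps `f : E → A` with `f (x·a) = star a * f x`, with right
`A`-module structure `(f·a) x = f x * a`. -/
def sdual (E : Type*) [AddCommGroup E] [Module Aᵐᵒᵖ E] : Submodule Aᵐᵒᵖ (E → A) where
  carrier := {f | (∀ x y, f (x + y) = f x + f y) ∧ ∀ (a : A) (x : E), f (op a • x) = star a * f x}
  add_mem' := by
    intro f g hf hg
    refine ⟨fun x y => ?_, fun a x => ?_⟩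
    · simp only [Pi.add_apply, hf.1 x y, hg.1 x y]; abel
    · simp only [Pi.add_apply, hf.2 a x, hg.2 a x, mul_add]
  zero_mem' := ⟨fun _ _ => by simp, fun _ _ => by simp⟩
  smul_mem' := by
    intro m f hf
    refine ⟨fun x y => ?_, fun a x => ?_⟩
    · simp only [Pi.smul_apply, smul_eq_mul_unop, hf.1 x y, add_mul]
    · simp only [Pi.smul_apply, smul_eq_mul_unop, hf.2 a x, mul_assoc]

/-- The canonical map from `E` to its double conjugate-semilinear dual,
`x ↦ (f ↦ star (f x))`. -/
def bid (E : Type*) [AddCommGroup E] [Module Aᵐᵒᵖ E] :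
    E →ₗ[Aᵐᵒᵖ] ↥(sdual A ↥(sdual A E)) where
  toFun x :=
    ⟨fun f => star ((f : E → A) x),
     ⟨fun f g => by simp, fun a f => by
        show star (((op a • f : ↥(sdual A E)) : E → A) x) = star a * star ((f : E → A) x)
        rw [Submodule.coe_smul, Pi.smul_apply, smul_eq_mul_unop, star_mul, unop_op]⟩⟩
  map_add' x y := by
    ext f
    simpa using (f.2.1 x y ▸ star_add _ _)
  map_smul' m x := by
    ext f
    show star ((f : E → A) (m • x)) = star ((f : E → A) x) * m.unop
    rw [show m • x = op m.unop • x by rw [op_unop], f.2.2 m.unop x, star_mul, star_star]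

/-- The transpose of a linear map between right `A`-modules, acting on
conjugate-semilinear duals by precomposition. -/
def transp {E F : Type*} [AddCommGroup E] [Module Aᵐᵒᵖ E] [AddCommGroup F] [Module Aᵐᵒᵖ F]
    (u : E →ₗ[Aᵐᵒᵖ] F) : ↥(sdual A F) →ₗ[Aᵐᵒᵖ] ↥(sdual A E) where
  toFun f :=
    ⟨fun x => (f : F → A) (u x),
     ⟨fun x y => by show (f : F → A) (u (x + y)) = _; rw [map_add, f.2.1],
      fun a x => by show (f : F → A) (u (op a • x)) = _; rw [map_smul, f.2.2]⟩⟩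
  map_add' f g := by
    ext x
    show ((f + g : ↥(sdual A F)) : F → A) (u x) = ((f : F → A) (u x)) + ((g : F → A) (u x))
    rw [Submodule.coe_add, Pi.add_apply]
  map_smul' m f := by
    ext x
    show ((m • f : ↥(sdual A F)) : F → A) (u x) = ((f : F → A) (u x)) * m.unop
    rw [Submodule.coe_smul, Pi.smul_apply, smul_eq_mul_unop]


/-!
Surjectivity is Nakayama's lemma for the nilpotent ideal `I`: if `range ψ + I E* = E*`, then
`E* = range ψ + I^k E*` for every `k`, and `I^k = 0` for large `k`. Injectivity then follows from
`ε`-hermitian symmetry, `star (ψ y x) = ψ x y * ε`: if `ψ x = 0`, every functional `ψ y`, hence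
(by surjectivity) every functional, vanishes at `x`, and the dual of a projective module
separates points.
-/

namespace Submodule

variable {R M N : Type*} [Ring R] [AddCommGroup M] [Module R M] [AddCommGroup N] [Module R N]

theorem sup_pow_smul_top_eq_top {P : Submodule R M} {I : Ideal R} (h : P ⊔ I • ⊤ = ⊤) (k : ℕ) :
    P ⊔ I ^ k • ⊤ = ⊤ := by
  induction k with
  | zero => rw [Submodule.pow_zero, Ideal.one_eq_top, top_smul, sup_top_eq]
  | succ k ih =>
    refine eq_top_iff.2 (ih.ge.trans (sup_le le_sup_left ?_))
    calc I ^ k • ⊤ = I ^ k • (P ⊔ I • ⊤) := by rw [h]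
      _ = I ^ k • P ⊔ I ^ (k + 1) • ⊤ := by rw [smul_sup, Submodule.pow_succ, Submodule.mul_smul]
      _ ≤ P ⊔ I ^ (k + 1) • ⊤ := sup_le_sup_right smul_le_right _

theorem eq_top_of_sup_smul_top_eq_top {P : Submodule R M} {I : Ideal R} (hI : IsNilpotent I)
    (h : P ⊔ I • ⊤ = ⊤) : P = ⊤ := by
  obtain ⟨n, hn⟩ := hI
  simpa [hn] using sup_pow_smul_top_eq_top h n

theorem range_sup_eq_top_of_surjective_mapQ (f : M →ₗ[R] N) {p : Submodule R M}
    {q : Submodule R N} (h : p ≤ q.comap f) (hf : Function.Surjective (p.mapQ q f h)) :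
    LinearMap.range f ⊔ q = ⊤ := by
  have hrange := range_mapQ p q f h
  rw [LinearMap.range_eq_top.2 hf] at hrange
  rw [sup_comm, ← comap_map_mkQ, ← hrange, comap_top]

end Submodule

theorem LinearMap.surjective_of_surjective_mapQ_of_isNilpotent {R M N : Type*} [Ring R]
    [AddCommGroup M] [Module R M] [AddCommGroup N] [Module R N] {I : Ideal R}
    (hI : IsNilpotent I) (f : M →ₗ[R] N) {p : Submodule R M}
    (h : p ≤ (I • (⊤ : Submodule R N)).comap f) (hf : Function.Surjective (p.mapQ _ f h)) :
    Function.Surjective f :=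
  range_eq_top.1 <| Submodule.eq_top_of_sup_smul_top_eq_top hI <|
    Submodule.range_sup_eq_top_of_surjective_mapQ f h hf

section SDual

variable {A} {E : Type*} [AddCommGroup E] [Module Aᵐᵒᵖ E]

theorem star_unop_comp_mem_sdual (g : E →ₗ[Aᵐᵒᵖ] Aᵐᵒᵖ) :
    (fun x => star (unop (g x))) ∈ sdual A E :=
  ⟨fun x y => by simp, fun a x => by simp [star_mul]⟩

theorem eq_zero_of_forall_sdual_apply_eq_zero [Module.Projective Aᵐᵒᵖ E] {x : E}
    (hx : ∀ f : sdual A E, (f : E → A) x = 0) : x = 0 := by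
  obtain ⟨s, hs⟩ := Module.projective_def.mp (inferInstance : Module.Projective Aᵐᵒᵖ E)
  by_contra hx0
  have hsx : s x ≠ 0 := fun h => hx0 (by simpa [h] using (hs x).symm)
  obtain ⟨i, hi⟩ := Finsupp.ne_iff.mp hsx
  have := hx ⟨_, star_unop_comp_mem_sdual (Finsupp.lapply i ∘ₗ s)⟩
  exact hi (by simpa using this)

theorem star_apply_eq_apply_mul_of_even {ε : A} (hε : ε = 1 ∨ ε = -1) {ψ₀ ψ : E →ₗ[Aᵐᵒᵖ] sdual A E}
    (hψ : ∀ x, ψ x = ψ₀ x + op ε • transp A ψ₀ (bid A E x)) (x y : E) :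
    star ((ψ y : E → A) x) = (ψ x : E → A) y * ε := by
  have happly : ∀ x y : E, (ψ x : E → A) y = (ψ₀ x : E → A) y + star ((ψ₀ y : E → A) x) * ε :=
    fun x y => by rw [hψ x]; rfl
  rw [happly, happly]
  rcases hε with rfl | rfl <;> simp [add_comm]

theorem injective_of_surjective_of_star_apply_eq {ε : A} [Module.Projective Aᵐᵒᵖ E]
    {ψ : E →ₗ[Aᵐᵒᵖ] sdual A E} (hsurj : Function.Surjective ψ)
    (hψ : ∀ x y, star ((ψ y : E → A) x) = (ψ x : E → A) y * ε) : Function.Injective ψ := by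
  refine (injective_iff_map_eq_zero ψ).2 fun x hx =>
    eq_zero_of_forall_sdual_apply_eq_zero (A := A) ?_
  intro f
  obtain ⟨y, rfl⟩ := hsurj f
  simpa [hx] using hψ x y

end SDual

theorem lift_nondegenerate_even_form_along_nilpotent_ideal
    (E : Type*) [AddCommGroup E] [Module Aᵐᵒᵖ E]
    [Module.Projective Aᵐᵒᵖ E]
    (I : Ideal Aᵐᵒᵖ)
    -- `I` is nilpotent
    (hnil : IsNilpotent I)
    (ε : A) (hε : ε = 1 ∨ ε = -1)
    (ψ₀ ψ : E →ₗ[Aᵐᵒᵖ] ↥(sdual A E))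
    -- `ψ = ψ₀ + ε ᵗψ₀` is the even hermitian form associated to the lift `ψ₀` of `φ₀`
    (hψeven : ∀ x, ψ x = ψ₀ x + op ε • transp A ψ₀ (bid A E x))
    -- `ψ` maps `I·E` into `I·E*`, hence induces a map on the reductions mod `I`
    (hle : I • (⊤ : Submodule Aᵐᵒᵖ E) ≤
      (I • (⊤ : Submodule Aᵐᵒᵖ ↥(sdual A E))).comap ψ)
    -- the reduction of `ψ` mod `I` is the nondegenerate form `φ`
    (hred : Function.Bijective
      (Submodule.mapQ (I • (⊤ : Submodule Aᵐᵒᵖ E))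
        (I • (⊤ : Submodule Aᵐᵒᵖ ↥(sdual A E))) ψ hle)) :
    Function.Bijective ψ := by
  have hsurj := LinearMap.surjective_of_surjective_mapQ_of_isNilpotent hnil ψ hle hred.2
  exact ⟨injective_of_surjective_of_star_apply_eq hsurj (star_apply_eq_apply_mul_of_even hε hψeven), hsurj⟩
end

section
/- Let A, B be rings with anti-involution and φ : A × B → C a ℤ-bilinear map satisfying φ(aa', bb') = φ(a,b)φ(a',b') and conj(φ(a,b)) = φ(ā, b̄). If (E, θ) is an ε-hermitian A-module (ᵗθ = εθ) and (F, ψ₀) an η-quadratic B-module, then θ ⊗ ψ₀ defines an (εη)-quadratic form on E ⊗ F; moreover if α is unitary for θ and β is orthogonal for ψ₀ (witnessed by γ), then (α ⊗ β, α ⊗ γ) is a morphism in the enlarged quadratic category, i.e. ᵗ(α⊗β) ∘ (θ⊗ψ₀) ∘ (α⊗β) = θ⊗ψ₀ + (θ⊗γ) − εη ᵗ(θ⊗γ). -/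
/-!
Multiplicativity and star-compatibility of `Φ` give
`ᵗ(α⊗β)(θ⊗ψ₀)(α⊗β) = (ᵗα θ α) ⊗ (ᵗβ ψ₀ β) = θ ⊗ (ψ₀ + γ - η ᵗγ)`, which biadditivity expands
to `θ⊗ψ₀ + θ⊗γ - η (θ ⊗ ᵗγ)`. Since `θ` is `ε`-hermitian, `ᵗ(θ⊗γ) = ε (θ ⊗ ᵗγ)`, and `ε² = 1`
turns `η (θ ⊗ ᵗγ)` into `εη ᵗ(θ⊗γ)`.
-/

section Conjugation

variable {R S T : Type*} [Mul R] [Mul S] [Mul T] [Star R] [Star S] [Star T] {Φ : R → S → T}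

theorem star_mul_mul_eq_of_map_mul_of_map_star
    (hmul : ∀ r r' s s', Φ (r * r') (s * s') = Φ r s * Φ r' s')
    (hstar : ∀ r s, star (Φ r s) = Φ (star r) (star s)) (α θ : R) (β ψ : S) :
    star (Φ α β) * Φ θ ψ * Φ α β = Φ (star α * θ * α) (star β * ψ * β) := by
  rw [hstar, ← hmul, ← hmul]

end Conjugation

section Biadditive

variable {R S T : Type*} [AddCommGroup T] {Φ : R → S → T}

theorem map_zsmul_left_of_map_add_left [AddGroup R]
    (hadd₁ : ∀ r r' s, Φ (r + r') s = Φ r s + Φ r' s) (n : ℤ) (r : R) (s : S) :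
    Φ (n • r) s = n • Φ r s :=
  map_zsmul (AddMonoidHom.mk' (Φ · s) (hadd₁ · · s)) n r

theorem map_sub_zsmul_right_of_map_add_right [AddGroup S]
    (hadd₂ : ∀ r s s', Φ r (s + s') = Φ r s + Φ r s') (r : R) (s s' : S) (n : ℤ) :
    Φ r (s - n • s') = Φ r s - n • Φ r s' := by
  let f : S →+ T := AddMonoidHom.mk' (Φ r) (hadd₂ r)
  rw [show Φ r = f from rfl, map_sub, map_zsmul]

end Biadditive

theorem star_map_of_star_eq_zsmul {R S T : Type*} [AddGroup R] [Star R] [Star S]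
    [AddCommGroup T] [Star T] {Φ : R → S → T}
    (hadd₁ : ∀ r r' s, Φ (r + r') s = Φ r s + Φ r' s)
    (hstar : ∀ r s, star (Φ r s) = Φ (star r) (star s))
    {ε : ℤ} {θ : R} (hθ : star θ = ε • θ) (γ : S) :
    star (Φ θ γ) = ε • Φ θ (star γ) := by
  rw [hstar, hθ, map_zsmul_left_of_map_add_left hadd₁]

theorem cup_product_hermitian_quadratic_general
    (R S T : Type*) [Ring R] [Ring S] [Ring T]
    [StarRing R] [StarRing S] [StarRing T]
    (Φ : R → S → T)
    (hadd₁ : ∀ r r' s, Φ (r + r') s = Φ r s + Φ r' s)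
    (hadd₂ : ∀ r s s', Φ r (s + s') = Φ r s + Φ r s')
    (hmul : ∀ r r' s s', Φ (r * r') (s * s') = Φ r s * Φ r' s')
    (hstar : ∀ r s, star (Φ r s) = Φ (star r) (star s))
    (ε η : ℤ) (hε : ε = 1 ∨ ε = -1)
    (θ α : R) (hθ : star θ = ε • θ)
    (ψ₀ β γ : S)
    (hα : star α * θ * α = θ)
    (hβ : star β * ψ₀ * β = ψ₀ + γ - η • star γ) :
    star (Φ α β) * Φ θ ψ₀ * Φ α β
      = Φ θ ψ₀ + Φ θ γ - (ε * η) • star (Φ θ γ) := by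
  have hεε : ε * ε = 1 := mul_self_eq_one_iff.mpr hε
  calc star (Φ α β) * Φ θ ψ₀ * Φ α β
      = Φ θ (ψ₀ + γ - η • star γ) := by
        rw [star_mul_mul_eq_of_map_mul_of_map_star hmul hstar, hα, hβ]
    _ = Φ θ ψ₀ + Φ θ γ - η • Φ θ (star γ) := by
        rw [map_sub_zsmul_right_of_map_add_right hadd₂, hadd₂]
    _ = Φ θ ψ₀ + Φ θ γ - (ε * η) • star (Φ θ γ) := by
        rw [star_map_of_star_eq_zsmul hadd₁ hstar hθ, smul_smul, mul_right_comm, hεε, one_mul]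

theorem cup_product_hermitian_quadratic
    (R S T : Type*) [Ring R] [Ring S] [Ring T]
    [StarRing R] [StarRing S] [StarRing T]
    (Φ : R → S → T)
    (hadd₁ : ∀ r r' s, Φ (r + r') s = Φ r s + Φ r' s)
    (hadd₂ : ∀ r s s', Φ r (s + s') = Φ r s + Φ r s')
    (hmul : ∀ r r' s s', Φ (r * r') (s * s') = Φ r s * Φ r' s')
    (hstar : ∀ r s, star (Φ r s) = Φ (star r) (star s))
    (ε η : ℤ) (hε : ε = 1 ∨ ε = -1) (hη : η = 1 ∨ η = -1)
    (θ α : R) (hθ : star θ = ε • θ)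
    (ψ₀ β γ : S)
    (hα : star α * θ * α = θ)
    (hβ : star β * ψ₀ * β = ψ₀ + γ - η • star γ) :
    star (Φ α β) * Φ θ ψ₀ * Φ α β
      = Φ θ ψ₀ + Φ θ γ - (ε * η) • star (Φ θ γ) :=
  cup_product_hermitian_quadratic_general R S T Φ hadd₁ hadd₂ hmul hstar ε η hε θ α hθ ψ₀ β γ hα hβ
end

section
/- (Clauwens, nondegeneracy of the product form) Let E be a module identified with its dual via an isomorphism so that duality becomes adjunction, let θ(s) = Σ θₙ sⁿ ∈ End(E)[s] be such that H(s) := Σ θₙ sⁿ + Σ θₙ* (1−s)ⁿ is invertible in End(E)[s], and let φ be an endomorphism of a module F with φ + φ* = 1. Then κ := Σ θₙ ⊗ φⁿ ∈ End(E ⊗ F) satisfies κ + κ* = H evaluated at φ (i.e. Σ θₙ ⊗ φⁿ + Σ θₙ* ⊗ (1−φ)ⁿ), and in particular κ + κ* is invertible. -/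
/-!
Since `φ* = 1 - φ`, star-compatibility of `Φ` turns `κ*` into `Σ θₙ* ⊗ (1 - φ)ⁿ`.
As `r ⊗ 1` commutes with `1 ⊗ φ`, evaluating `s ↦ 1 ⊗ φ` with coefficients `r ↦ r ⊗ 1` is a
ring homomorphism `R[s] → T`; it sends `H(s)` to `κ + κ*`, which is therefore a unit.
-/

open Polynomial Finset

structure IsTensorPairing {R S T : Type*} [Ring R] [Ring S] [Ring T] (Φ : R → S → T) : Prop where
  add_left : ∀ r r' s, Φ (r + r') s = Φ r s + Φ r' s
  add_right : ∀ r s s', Φ r (s + s') = Φ r s + Φ r s'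
  mul_mul : ∀ r r' s s', Φ (r * r') (s * s') = Φ r s * Φ r' s'
  one_one : Φ 1 1 = 1

namespace IsTensorPairing

variable {R S T : Type*} [Ring R] [Ring S] [Ring T] {Φ : R → S → T}

def leftHom (hΦ : IsTensorPairing Φ) : R →+* T :=
  { AddMonoidHom.mk' (Φ · 1) (fun r r' => hΦ.add_left r r' 1) with
    map_one' := hΦ.one_one
    map_mul' := fun r r' => by simpa using hΦ.mul_mul r r' 1 1 }

def rightHom (hΦ : IsTensorPairing Φ) : S →+* T :=
  { AddMonoidHom.mk' (Φ 1 ·) (fun s s' => hΦ.add_right 1 s s') with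
    map_one' := hΦ.one_one
    map_mul' := fun s s' => by simpa using hΦ.mul_mul 1 1 s s' }

theorem leftHom_apply (hΦ : IsTensorPairing Φ) (r : R) : hΦ.leftHom r = Φ r 1 := rfl

theorem rightHom_apply (hΦ : IsTensorPairing Φ) (s : S) : hΦ.rightHom s = Φ 1 s := rfl

theorem leftHom_mul_rightHom (hΦ : IsTensorPairing Φ) (r : R) (s : S) :
    hΦ.leftHom r * hΦ.rightHom s = Φ r s := by
  simpa [leftHom_apply, rightHom_apply] using (hΦ.mul_mul r 1 1 s).symm

theorem commute_leftHom_rightHom (hΦ : IsTensorPairing Φ) (r : R) (s : S) :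
    Commute (hΦ.leftHom r) (hΦ.rightHom s) := by
  have h : hΦ.rightHom s * hΦ.leftHom r = Φ r s := by
    simpa [leftHom_apply, rightHom_apply] using (hΦ.mul_mul 1 r s 1).symm
  exact (hΦ.leftHom_mul_rightHom r s).trans h.symm

def evalAt (hΦ : IsTensorPairing Φ) (φ : S) : R[X] →+* T :=
  eval₂RingHom' hΦ.leftHom (hΦ.rightHom φ) fun r => hΦ.commute_leftHom_rightHom r φ

theorem evalAt_C (hΦ : IsTensorPairing Φ) (φ : S) (r : R) :
    hΦ.evalAt φ (C r) = hΦ.leftHom r :=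
  eval₂_C _ _

theorem evalAt_X (hΦ : IsTensorPairing Φ) (φ : S) : hΦ.evalAt φ X = hΦ.rightHom φ :=
  eval₂_X _ _

theorem evalAt_C_mul_pow (hΦ : IsTensorPairing Φ) (φ : S) (r : R) {p : R[X]} {x : S}
    (hp : hΦ.evalAt φ p = hΦ.rightHom x) (n : ℕ) :
    hΦ.evalAt φ (C r * p ^ n) = Φ r (x ^ n) := by
  rw [map_mul, map_pow, evalAt_C, hp, ← map_pow, leftHom_mul_rightHom]

theorem evalAt_C_mul_X_pow (hΦ : IsTensorPairing Φ) (φ : S) (r : R) (n : ℕ) :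
    hΦ.evalAt φ (C r * X ^ n) = Φ r (φ ^ n) :=
  hΦ.evalAt_C_mul_pow φ r (hΦ.evalAt_X φ) n

theorem evalAt_C_mul_one_sub_X_pow (hΦ : IsTensorPairing Φ) (φ : S) (r : R) (n : ℕ) :
    hΦ.evalAt φ (C r * (1 - X) ^ n) = Φ r ((1 - φ) ^ n) :=
  hΦ.evalAt_C_mul_pow φ r (by rw [map_sub, map_one, evalAt_X, map_sub, map_one]) n

end IsTensorPairing

theorem star_sum_tensor_pow_of_add_star_eq_one {R S T : Type*} [Ring R] [Ring S]
    [AddCommMonoid T] [StarRing R] [StarRing S] [StarAddMonoid T] {Φ : R → S → T}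
    (hstar : ∀ r s, star (Φ r s) = Φ (star r) (star s)) {φ : S} (hφ : φ + star φ = 1)
    (N : ℕ) (θ : ℕ → R) :
    star (∑ n ∈ range N, Φ (θ n) (φ ^ n)) = ∑ n ∈ range N, Φ (star (θ n)) ((1 - φ) ^ n) := by
  have hstarφ : star φ = 1 - φ := eq_sub_of_add_eq' hφ
  simp only [star_sum, hstar, star_pow, hstarφ]

theorem clauwens_product_form_nondegenerate
    (R S T : Type*) [Ring R] [Ring S] [Ring T]
    [StarRing R] [StarRing S] [StarRing T]
    (Φ : R → S → T)
    (hadd₁ : ∀ r r' s, Φ (r + r') s = Φ r s + Φ r' s)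
    (hadd₂ : ∀ r s s', Φ r (s + s') = Φ r s + Φ r s')
    (hmul : ∀ r r' s s', Φ (r * r') (s * s') = Φ r s * Φ r' s')
    (hone : Φ 1 1 = 1)
    (hstar : ∀ r s, star (Φ r s) = Φ (star r) (star s))
    (N : ℕ) (θ : ℕ → R)
    -- `H(s) = Σ θₙ sⁿ + Σ θₙ* (1−s)ⁿ` is invertible in `R[s]`
    (hH : IsUnit ((∑ n ∈ range N, C (θ n) * X ^ n)
      + (∑ n ∈ range N, C (star (θ n)) * (1 - X) ^ n)))
    (φ : S) (hφ : φ + star φ = 1) :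
    (∑ n ∈ range N, Φ (θ n) (φ ^ n)) + star (∑ n ∈ range N, Φ (θ n) (φ ^ n))
        = (∑ n ∈ range N, Φ (θ n) (φ ^ n))
          + (∑ n ∈ range N, Φ (star (θ n)) ((1 - φ) ^ n)) ∧
    IsUnit ((∑ n ∈ range N, Φ (θ n) (φ ^ n)) + star (∑ n ∈ range N, Φ (θ n) (φ ^ n))) := by
  have hΦ : IsTensorPairing Φ := ⟨hadd₁, hadd₂, hmul, hone⟩
  rw [star_sum_tensor_pow_of_add_star_eq_one hstar hφ]
  refine ⟨rfl, ?_⟩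
  have hHφ := hH.map (hΦ.evalAt φ)
  simpa only [map_add, map_sum, hΦ.evalAt_C_mul_X_pow, hΦ.evalAt_C_mul_one_sub_X_pow] using hHφ
end

section
/- (Clauwens, independence of representative) With notation as above, if θ(s) is replaced by θ(s) + Z(s) − Z(s)* where Z(s) = Σ σₙ sⁿ and Z(s)* = Σ σₙ* (1−s)ⁿ, then the associated product form changes from κ = θ(φ) to κ' = κ + σ(φ) − (σ(φ))*, where σ(φ) = Σ σₙ ⊗ φⁿ; in particular κ and κ' define the same quadratic form class (they differ by an element of the form W − W*). -/
open Finset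

theorem star_sum_apply_pow {R S T : Type*} [Star R] [Monoid S] [StarMul S]
    [AddCommMonoid T] [StarAddMonoid T] (Φ : R → S → T)
    (hstar : ∀ r s, star (Φ r s) = Φ (star r) (star s))
    (N : ℕ) (σ : ℕ → R) (φ : S) :
    star (∑ n ∈ range N, Φ (σ n) (φ ^ n)) = ∑ n ∈ range N, Φ (star (σ n)) (star φ ^ n) := by
  simp only [star_sum, hstar, star_pow]

theorem clauwens_product_form_well_defined_general
    (R S T : Type*) [Ring R] [Ring S] [Ring T]
    [StarRing R] [StarRing S] [StarRing T]
    (Φ : R → S → T)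
    (hstar : ∀ r s, star (Φ r s) = Φ (star r) (star s))
    (N : ℕ) (θ σ : ℕ → R)
    (φ : S) (hφ : φ + star φ = 1) :
    -- the adjoint of `W = σ(φ) = Σ σₙ ⊗ φⁿ` is `Σ σₙ* ⊗ (1−φ)ⁿ` ...
    star (∑ n ∈ range N, Φ (σ n) (φ ^ n))
        = ∑ n ∈ range N, Φ (star (σ n)) ((1 - φ) ^ n) ∧
    -- ... hence the product form associated to `θ + Z − Z*` is `κ + W − W*`
    ((∑ n ∈ range N, Φ (θ n) (φ ^ n)) + (∑ n ∈ range N, Φ (σ n) (φ ^ n))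
        - (∑ n ∈ range N, Φ (star (σ n)) ((1 - φ) ^ n))
      = (∑ n ∈ range N, Φ (θ n) (φ ^ n)) + (∑ n ∈ range N, Φ (σ n) (φ ^ n))
        - star (∑ n ∈ range N, Φ (σ n) (φ ^ n))) := by
  have hstar_φ : star φ = 1 - φ := eq_sub_of_add_eq' hφ
  have hadjoint := star_sum_apply_pow Φ hstar N σ φ
  rw [hstar_φ] at hadjoint
  exact ⟨hadjoint, by rw [hadjoint]⟩

theorem clauwens_product_form_well_defined
    (R S T : Type*) [Ring R] [Ring S] [Ring T]
    [StarRing R] [StarRing S] [StarRing T]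
    (Φ : R → S → T)
    (hadd₁ : ∀ r r' s, Φ (r + r') s = Φ r s + Φ r' s)
    (hadd₂ : ∀ r s s', Φ r (s + s') = Φ r s + Φ r s')
    (hmul : ∀ r r' s s', Φ (r * r') (s * s') = Φ r s * Φ r' s')
    (hstar : ∀ r s, star (Φ r s) = Φ (star r) (star s))
    (N : ℕ) (θ σ : ℕ → R)
    (φ : S) (hφ : φ + star φ = 1) :
    -- the adjoint of `W = σ(φ) = Σ σₙ ⊗ φⁿ` is `Σ σₙ* ⊗ (1−φ)ⁿ` ...
    star (∑ n ∈ range N, Φ (σ n) (φ ^ n))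
        = ∑ n ∈ range N, Φ (star (σ n)) ((1 - φ) ^ n) ∧
    -- ... hence the product form associated to `θ + Z − Z*` is `κ + W − W*`
    ((∑ n ∈ range N, Φ (θ n) (φ ^ n)) + (∑ n ∈ range N, Φ (σ n) (φ ^ n))
        - (∑ n ∈ range N, Φ (star (σ n)) ((1 - φ) ^ n))
      = (∑ n ∈ range N, Φ (θ n) (φ ^ n)) + (∑ n ∈ range N, Φ (σ n) (φ ^ n))
        - star (∑ n ∈ range N, Φ (σ n) (φ ^ n))) :=
  clauwens_product_form_well_defined_general R S T Φ hstar N θ σ φ hφ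
end
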